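/- arXiv:1309.1485 — 2 statements merged into one kernel-verified Lean document; each statement's English description precedes it below -/
import Mathlib

section
/- Suppose x : ℝ → ℝⁿ satisfies ẋ(t) = A x(t) + E d(t), x(0) = 0, and suppose there exist a symmetric positive definite Q₁ and ρ₁ > 0 such that the block matrix [[Aᵀ Q₁ + Q₁ A, Q₁ E], [Eᵀ Q₁, −ρ₁ I]] is negative definite and [[Q₁, P₁^{1/2}], [P₁^{1/2}, ρ₁ I]] is positive definite (where P₁ is symmetric positive definite). Then sup_t (x(t)ᵀ P₁ x(t))^{1/2} ≤ ρ₁ ‖d‖_{L²}, i.e., the peak P₁-weighted norm of the state is bounded by ρ₁ times the L² norm of d. -/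
open Matrix MeasureTheory

/-- Euclidean norm of a vector. -/
noncomputable def euclEnorm {n : ℕ} (v : Fin n → ℝ) : ℝ := Real.sqrt (∑ i, v i ^ 2)

/-- L² norm of a signal on [0,∞). -/
noncomputable def l2norm {q : ℕ} (d : ℝ → Fin q → ℝ) : ℝ :=
  Real.sqrt (∫ t in Set.Ioi (0 : ℝ), euclEnorm (d t) ^ 2)

/-! Along a trajectory the storage function `V = xᵀ Q₁ x` satisfies `V' ≤ ρ₁ |d|²` by the first
LMI, so `V (x t) ≤ ρ₁ ‖d‖₂²` because `x 0 = 0`. A Schur complement turns the second LMI into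
`P₁ = S² ≤ ρ₁ Q₁` for the symmetric square root `S`, hence `x tᵀ P₁ x t ≤ ρ₁² ‖d‖₂²`. -/

lemma euclEnorm_sq {m : ℕ} (v : Fin m → ℝ) : euclEnorm v ^ 2 = v ⬝ᵥ v := by
  rw [euclEnorm, Real.sq_sqrt (Finset.sum_nonneg fun i _ => sq_nonneg _)]
  simp [dotProduct, sq]

section Calculus

variable {ι : Type*} [Fintype ι] {f g : ℝ → ι → ℝ} {f' g' : ι → ℝ} {t : ℝ}

theorem HasDerivAt.dotProduct (hf : HasDerivAt f f' t) (hg : HasDerivAt g g' t) :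
    HasDerivAt (fun s => f s ⬝ᵥ g s) (f' ⬝ᵥ g t + f t ⬝ᵥ g') t := by
  simp only [_root_.dotProduct, ← Finset.sum_add_distrib]
  exact HasDerivAt.fun_sum fun i _ => (hasDerivAt_pi.mp hf i).mul (hasDerivAt_pi.mp hg i)

theorem HasDerivAt.matrix_mulVec {κ : Type*} [Fintype κ] (M : Matrix κ ι ℝ)
    (hf : HasDerivAt f f' t) : HasDerivAt (fun s => M *ᵥ f s) (M *ᵥ f') t := by
  have := (M.mulVecLin.toContinuousLinearMap.hasFDerivAt (x := f t)).comp_hasDerivAt t hf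
  exact this

end Calculus

theorem sub_le_integral_Ioi_of_hasDerivAt_le {V V' g : ℝ → ℝ} {t : ℝ} (ht : 0 ≤ t)
    (hV : ∀ s, HasDerivAt V (V' s) s) (hle : ∀ s, V' s ≤ g s)
    (hg : IntegrableOn g (Set.Ioi 0)) (hg0 : ∀ s, 0 ≤ g s) :
    V t - V 0 ≤ ∫ s in Set.Ioi 0, g s :=
  calc V t - V 0 ≤ ∫ s in 0..t, g s :=
        intervalIntegral.sub_le_integral_of_hasDeriv_right_of_le ht
          (fun s _ => (hV s).continuousAt.continuousWithinAt)
          (fun s _ => (hV s).hasDerivWithinAt)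
          ((integrableOn_Icc_iff_integrableOn_Ioc (f := g) (a := 0)).mpr
            (hg.mono_set Set.Ioc_subset_Ioi_self))
          fun s _ => hle s
    _ = ∫ s in Set.Ioc 0 t, g s := intervalIntegral.integral_of_le ht
    _ ≤ ∫ s in Set.Ioi 0, g s :=
        setIntegral_mono_set hg (Filter.Eventually.of_forall hg0)
          Set.Ioc_subset_Ioi_self.eventuallyLE

section BlockMatrix

variable {m p : Type*} [Fintype m] [Fintype p]

theorem sumElim_dotProduct_fromBlocks_mulVec {R : Type*} [CommSemiring R]
    (A : Matrix m m R) (B : Matrix m p R) (C : Matrix p m R) (D : Matrix p p R)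
    (u : m → R) (v : p → R) :
    Sum.elim u v ⬝ᵥ (fromBlocks A B C D *ᵥ Sum.elim u v) =
      u ⬝ᵥ (A *ᵥ u) + u ⬝ᵥ (B *ᵥ v) + (v ⬝ᵥ (C *ᵥ u) + v ⬝ᵥ (D *ᵥ v)) := by
  rw [fromBlocks_mulVec, sumElim_dotProduct_sumElim, dotProduct_add, dotProduct_add,
    Sum.elim_comp_inl, Sum.elim_comp_inr]

theorem lyapunov_derivative_le [DecidableEq p] {A Q : Matrix m m ℝ} {E : Matrix m p ℝ} {ρ : ℝ}
    (h : (-(fromBlocks (Aᵀ * Q + Q * A) (Q * E) (Eᵀ * Q) (-(ρ • 1)))).PosSemidef)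
    (u : m → ℝ) (v : p → ℝ) :
    (A *ᵥ u + E *ᵥ v) ⬝ᵥ (Q *ᵥ u) + u ⬝ᵥ (Q *ᵥ (A *ᵥ u + E *ᵥ v)) ≤ ρ * (v ⬝ᵥ v) := by
  have := h.dotProduct_mulVec_nonneg (Sum.elim u v)
  simp only [star_trivial, neg_mulVec, dotProduct_neg, sumElim_dotProduct_fromBlocks_mulVec] at this
  simp only [add_dotProduct, mulVec_add, dotProduct_add, add_mulVec, ← mulVec_mulVec,
    dotProduct_mulVec _ _ (Q *ᵥ u), vecMul_transpose, smul_mulVec, one_mulVec, dotProduct_smul,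
    smul_eq_mul] at this ⊢
  linarith

theorem dotProduct_mul_self_mulVec_le [DecidableEq m] {Q S : Matrix m m ℝ} {ρ : ℝ} (hρ : 0 < ρ)
    (h : (fromBlocks Q S S (ρ • 1)).PosSemidef) (u : m → ℝ) :
    u ⬝ᵥ ((S * S) *ᵥ u) ≤ ρ * (u ⬝ᵥ (Q *ᵥ u)) := by
  have hS : Sᴴ = S := ((isHermitian_fromBlocks_iff.mp h.isHermitian).2.1)
  have hD : (ρ • (1 : Matrix m m ℝ)).PosDef := PosDef.one.smul hρ
  have : Invertible (ρ • (1 : Matrix m m ℝ)) := hD.isUnit.invertible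
  have hSchur := (PosDef.fromBlocks₂₂ Q S hD).mp (hS.symm ▸ h)
  have := hSchur.dotProduct_mulVec_nonneg u
  have hinv : (ρ • (1 : Matrix m m ℝ))⁻¹ = ρ⁻¹ • 1 :=
    inv_eq_left_inv (by rw [smul_mul_smul_comm, inv_mul_cancel₀ hρ.ne', one_smul, one_mul])
  rw [hinv, hS] at this
  simp only [sub_mulVec, dotProduct_sub, Matrix.mul_smul, mul_one, smul_mul_assoc, smul_mulVec,
    dotProduct_smul, smul_eq_mul, star_trivial] at this
  rwa [sub_nonneg, inv_mul_le_iff₀ hρ] at this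

end BlockMatrix

theorem peak_norm_bound_lemma1_general {n q : ℕ}
    (A : Matrix (Fin n) (Fin n) ℝ) (E : Matrix (Fin n) (Fin q) ℝ)
    (P₁ Q₁ sqrtP₁ : Matrix (Fin n) (Fin n) ℝ) (ρ₁ : ℝ)
    (hρ₁ : 0 < ρ₁)
    (hsqrt : sqrtP₁.PosDef ∧ sqrtP₁ * sqrtP₁ = P₁)
    (hLMI1 : (-(Matrix.fromBlocks (Aᵀ * Q₁ + Q₁ * A) (Q₁ * E)
        (Eᵀ * Q₁) (-(ρ₁ • (1 : Matrix (Fin q) (Fin q) ℝ))))).PosDef)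
    (hLMI2 : (Matrix.fromBlocks Q₁ sqrtP₁ sqrtP₁
        (ρ₁ • (1 : Matrix (Fin n) (Fin n) ℝ))).PosDef)
    (d : ℝ → Fin q → ℝ)
    (hd : IntegrableOn (fun t => euclEnorm (d t) ^ 2) (Set.Ioi (0 : ℝ)))
    (x : ℝ → Fin n → ℝ) (hx0 : x 0 = 0)
    (hx : ∀ t, HasDerivAt x (A.mulVec (x t) + E.mulVec (d t)) t) :
    ∀ t, 0 ≤ t →
      Real.sqrt (dotProduct (x t) (P₁.mulVec (x t))) ≤ ρ₁ * l2norm d := by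
  intro t ht
  set I := ∫ s in Set.Ioi 0, euclEnorm (d s) ^ 2
  have hstorage : x t ⬝ᵥ (Q₁ *ᵥ x t) ≤ ρ₁ * I := by
    have := sub_le_integral_Ioi_of_hasDerivAt_le ht
      (fun s => (hx s).dotProduct ((hx s).matrix_mulVec Q₁))
      (fun s => (euclEnorm_sq (d s)).symm ▸ lyapunov_derivative_le hLMI1.posSemidef (x s) (d s))
      (hd.const_mul ρ₁) (fun s => by positivity)
    simpa [hx0, integral_const_mul] using this
  have hpeak : x t ⬝ᵥ (P₁ *ᵥ x t) ≤ ρ₁ ^ 2 * I :=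
    calc x t ⬝ᵥ (P₁ *ᵥ x t) ≤ ρ₁ * (x t ⬝ᵥ (Q₁ *ᵥ x t)) :=
          hsqrt.2 ▸ dotProduct_mul_self_mulVec_le hρ₁ hLMI2.posSemidef (x t)
      _ ≤ ρ₁ * (ρ₁ * I) := by gcongr
      _ = ρ₁ ^ 2 * I := by ring
  have hI : 0 ≤ I := setIntegral_nonneg measurableSet_Ioi fun s _ => by positivity
  calc Real.sqrt (x t ⬝ᵥ (P₁ *ᵥ x t)) ≤ Real.sqrt (ρ₁ ^ 2 * I) := Real.sqrt_le_sqrt hpeak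
    _ = ρ₁ * l2norm d := by rw [Real.sqrt_mul' _ hI, Real.sqrt_sq hρ₁.le, l2norm]

theorem peak_norm_bound_lemma1 {n q : ℕ}
    (A : Matrix (Fin n) (Fin n) ℝ) (E : Matrix (Fin n) (Fin q) ℝ)
    (P₁ Q₁ sqrtP₁ : Matrix (Fin n) (Fin n) ℝ) (ρ₁ : ℝ)
    (hP₁ : P₁.PosDef) (hQ₁ : Q₁.PosDef) (hρ₁ : 0 < ρ₁)
    (hsqrt : sqrtP₁.PosDef ∧ sqrtP₁ * sqrtP₁ = P₁)
    (hLMI1 : (-(Matrix.fromBlocks (Aᵀ * Q₁ + Q₁ * A) (Q₁ * E)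
        (Eᵀ * Q₁) (-(ρ₁ • (1 : Matrix (Fin q) (Fin q) ℝ))))).PosDef)
    (hLMI2 : (Matrix.fromBlocks Q₁ sqrtP₁ sqrtP₁
        (ρ₁ • (1 : Matrix (Fin n) (Fin n) ℝ))).PosDef)
    (d : ℝ → Fin q → ℝ)
    (hd : IntegrableOn (fun t => euclEnorm (d t) ^ 2) (Set.Ioi (0 : ℝ)))
    (x : ℝ → Fin n → ℝ) (hx0 : x 0 = 0)
    (hx : ∀ t, HasDerivAt x (A.mulVec (x t) + E.mulVec (d t)) t) :
    ∀ t, 0 ≤ t →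
      Real.sqrt (dotProduct (x t) (P₁.mulVec (x t))) ≤ ρ₁ * l2norm d :=
  peak_norm_bound_lemma1_general A E P₁ Q₁ sqrtP₁ ρ₁ hρ₁ hsqrt hLMI1 hLMI2 d hd x hx0 hx
end

section
/- In the sliding-mode observer error dynamics ė₁ = A₁₁ e₁, ė_y = A₂₁ e₁ + A₂₂ˢ e_y + ν − D₂ f̄, suppose a sliding motion occurs: e_y(t) = 0 and ė_y(t) = 0 for all t ≥ t₀. Then for t ≥ t₀, ν(t) = D₂ f̄(t) − A₂₁ e₁(t); in addition, if A₁₁ is Hurwitz, then e₁(t) → 0 and hence ν(t) − D₂ f̄(t) → 0 as t → ∞. -/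
open Matrix

/-- A real square matrix is Hurwitz if every (complex) eigenvalue has negative real part. -/
def Hurwitz {n : ℕ} (M : Matrix (Fin n) (Fin n) ℝ) : Prop :=
  ∀ μ ∈ spectrum ℂ (M.map (algebraMap ℝ ℂ)), μ.re < 0

/-!
On a generalized eigenspace of `B` with eigenvalue `μ`, writing `B = μ + N` with `N` nilpotent
there gives `exp (t • B) w = e^{tμ} ∑_{j<k} tʲ/j! Nʲ w`, a polynomial times `e^{tμ}`, which decays
when `Re μ < 0`. These spaces span `ℂⁿ`, and every solution of `ẏ = B y` is `exp (t • B) y₀`, so all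
solutions decay when `B` is Hurwitz; a real system is handled by complexifying it. On the sliding
surface `e_y = ė_y = 0` the error equation for `e_y` reads `0 = A₂₁ e₁ + ν - D₂ f̄`, whence
`ν - D₂ f̄ = -A₂₁ e₁ → 0`.
-/

open Filter Topology NormedSpace Finset Nat
open scoped Matrix.Norms.Operator

theorem Complex.tendsto_pow_mul_exp_mul_atTop_nhds_zero {c : ℂ} (hc : c.re < 0) (j : ℕ) :
    Tendsto (fun t : ℝ => (t : ℂ) ^ j * Complex.exp (t * c)) atTop (𝓝 0) := by
  rw [tendsto_zero_iff_norm_tendsto_zero]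
  refine (tendsto_rpow_mul_exp_neg_mul_atTop_nhds_zero j (-c.re) (neg_pos.2 hc)).congr' ?_
  filter_upwards [eventually_ge_atTop 0] with t ht
  simp [Complex.norm_exp, abs_of_nonneg ht, Real.rpow_natCast, mul_comm]

variable {ι : Type*} [Fintype ι] [DecidableEq ι]

theorem Matrix.exp_mulVec_eq_sum_of_pow_mulVec_eq_zero {𝕜 : Type*} [RCLike 𝕜]
    (N : Matrix ι ι 𝕜) {w : ι → 𝕜} {k : ℕ} (hk : N ^ k *ᵥ w = 0) :
    exp N *ᵥ w = ∑ j ∈ range k, (j ! : 𝕜)⁻¹ • (N ^ j *ᵥ w) := by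
  have hsum : HasSum (fun j => ((j ! : 𝕜)⁻¹ • N ^ j) *ᵥ w) (exp N *ᵥ w) :=
    (exp_series_hasSum_exp' (𝕂 := 𝕜) N).map (mulVec.addMonoidHomLeft w)
      (continuous_id.matrix_mulVec continuous_const)
  refine (hsum.unique (hasSum_sum_of_ne_finset_zero (s := range k) fun j hj => ?_)).trans ?_
  · rw [Finset.mem_range, not_lt] at hj
    rw [smul_mulVec, ← Nat.sub_add_cancel hj, pow_add, ← mulVec_mulVec, hk, mulVec_zero, smul_zero]
  · simp only [smul_mulVec]

theorem Matrix.tendsto_exp_smul_mulVec_of_mem_maxGenEigenspace (B : Matrix ι ι ℂ) {μ : ℂ}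
    (hμ : μ.re < 0) {w : ι → ℂ} (hw : w ∈ Module.End.maxGenEigenspace (toLinAlgEquiv' B) μ) :
    Tendsto (fun t : ℝ => exp (t • B) *ᵥ w) atTop (𝓝 0) := by
  obtain ⟨k, hk⟩ := (Module.End.mem_maxGenEigenspace _ _ _).1 hw
  set N := B - μ • 1
  have hNk : N ^ k *ᵥ w = 0 := by
    simpa [N, ← toLinAlgEquiv'_apply] using hk
  have hexp : ∀ t : ℝ, exp (t • B) *ᵥ w
      = ∑ j ∈ range k, ((t : ℂ) ^ j * Complex.exp (t * μ)) • ((j ! : ℂ)⁻¹ • (N ^ j *ᵥ w)) := by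
    intro t
    have hsplit : t • B = algebraMap ℂ _ (t * μ) + (t : ℂ) • N := by
      simp [N, Algebra.algebraMap_eq_smul_one, smul_sub, smul_smul, ← Complex.coe_smul]
    have htN : ((t : ℂ) • N) ^ k *ᵥ w = 0 := by rw [smul_pow, smul_mulVec, hNk, smul_zero]
    have hscalar : exp (algebraMap ℂ (Matrix ι ι ℂ) (t * μ))
        = algebraMap ℂ _ (Complex.exp (t * μ)) := by
      rw [Complex.exp_eq_exp_ℂ]
      exact (algebraMap_exp_comm _).symm
    rw [hsplit, exp_add_of_commute _ _ (Algebra.commute_algebraMap_left _ _), hscalar,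
      ← mulVec_mulVec, exp_mulVec_eq_sum_of_pow_mulVec_eq_zero _ htN,
      Algebra.algebraMap_eq_smul_one, smul_mulVec, one_mulVec, Finset.smul_sum]
    refine Finset.sum_congr rfl fun j _ => ?_
    rw [smul_pow, smul_mulVec]
    module
  have hterm : ∀ j, Tendsto (fun t : ℝ => ((t : ℂ) ^ j * Complex.exp (t * μ)) •
      ((j ! : ℂ)⁻¹ • (N ^ j *ᵥ w))) atTop (𝓝 0) := fun j => by
    simpa using (Complex.tendsto_pow_mul_exp_mul_atTop_nhds_zero hμ j).smul_const
      ((j ! : ℂ)⁻¹ • (N ^ j *ᵥ w))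
  simpa [hexp] using tendsto_finsetSum (range k) fun j _ => hterm j

theorem Matrix.tendsto_exp_smul_mulVec (B : Matrix ι ι ℂ) (hB : ∀ μ ∈ spectrum ℂ B, μ.re < 0)
    (v : ι → ℂ) : Tendsto (fun t : ℝ => exp (t • B) *ᵥ v) atTop (𝓝 0) := by
  have hv : v ∈ ⨆ μ, Module.End.maxGenEigenspace (toLinAlgEquiv' B) μ := by
    rw [Module.End.iSup_maxGenEigenspace_eq_top]
    exact Submodule.mem_top
  refine Submodule.iSup_induction _
    (motive := fun v => Tendsto (fun t : ℝ => exp (t • B) *ᵥ v) atTop (𝓝 0)) hv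
    (fun μ w hw => ?_) (by simp) fun w w' hw hw' => ?_
  · rcases eq_or_ne w 0 with rfl | hw0
    · simp
    have hμ : μ ∈ spectrum ℂ B := by
      rw [← AlgEquiv.spectrum_eq toLinAlgEquiv' B]
      exact (Module.End.HasUnifEigenvalue.lt zero_lt_one
        ((Submodule.ne_bot_iff _).2 ⟨w, hw, hw0⟩)).mem_spectrum
    exact tendsto_exp_smul_mulVec_of_mem_maxGenEigenspace B (hB μ hμ) hw
  · simpa [mulVec_add] using hw.add hw'

theorem Matrix.eq_exp_smul_mulVec_of_hasDerivAt (B : Matrix ι ι ℂ) {y : ℝ → ι → ℂ}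
    (hy : ∀ t, HasDerivAt y (B *ᵥ y t) t) : y = fun t => exp (t • B) *ᵥ y 0 := by
  have hsol (t : ℝ) :
      HasDerivAt (fun u : ℝ => exp (u • B) *ᵥ y 0) (B *ᵥ (exp (t • B) *ᵥ y 0)) t := by
    exact (((mulVec.addMonoidHomLeft (y 0)).toRealLinearMap
      (continuous_id.matrix_mulVec continuous_const)).hasFDerivAt.comp_hasDerivAt t
      (hasDerivAt_exp_smul_const' B t)).congr_deriv (mulVec_mulVec _ _ _).symm
  exact ODE_solution_unique_univ (t₀ := 0) (s := fun _ => Set.univ)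
    (fun _ => (mulVecLin B).toContinuousLinearMap.lipschitz.lipschitzOnWith)
    (fun t => ⟨hy t, trivial⟩) (fun t => ⟨hsol t, trivial⟩) (by simp)

theorem Hurwitz.tendsto_zero_of_hasDerivAt {n : ℕ} {A : Matrix (Fin n) (Fin n) ℝ}
    (hA : Hurwitz A) {x : ℝ → Fin n → ℝ} (hx : ∀ t, HasDerivAt x (A *ᵥ x t) t) :
    Tendsto x atTop (𝓝 0) := by
  set y : ℝ → Fin n → ℂ := fun t => algebraMap ℝ ℂ ∘ x t
  have hy (t : ℝ) : HasDerivAt y (A.map (algebraMap ℝ ℂ) *ᵥ y t) t := by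
    refine hasDerivAt_pi.2 fun i => ?_
    exact (hasDerivAt_pi.1 (hx t) i).ofReal_comp.congr_deriv
      (RingHom.map_mulVec (algebraMap ℝ ℂ) A (x t) i)
  have hy0 : Tendsto y atTop (𝓝 0) := by
    rw [eq_exp_smul_mulVec_of_hasDerivAt _ hy]
    exact tendsto_exp_smul_mulVec _ hA _
  refine tendsto_pi_nhds.2 fun i => ?_
  simpa [y, Function.comp_def] using
    (Complex.continuous_re.tendsto 0).comp (tendsto_pi_nhds.1 hy0 i)

theorem sliding_motion_equivalent_injection {np p q : ℕ}
    (A₁₁ : Matrix (Fin np) (Fin np) ℝ) (A₂₁ : Matrix (Fin p) (Fin np) ℝ)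
    (A₂₂s : Matrix (Fin p) (Fin p) ℝ) (D₂ : Matrix (Fin p) (Fin q) ℝ)
    (fbar : ℝ → Fin q → ℝ) (ν : ℝ → Fin p → ℝ)
    (e₁ : ℝ → Fin np → ℝ) (ey : ℝ → Fin p → ℝ) (t₀ : ℝ)
    (he₁ : ∀ t, HasDerivAt e₁ (A₁₁.mulVec (e₁ t)) t)
    (hey : ∀ t, HasDerivAt ey
      (A₂₁.mulVec (e₁ t) + A₂₂s.mulVec (ey t) + ν t - D₂.mulVec (fbar t)) t)
    (hslide : ∀ t, t₀ ≤ t → ey t = 0 ∧ HasDerivAt ey 0 t) :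
    (∀ t, t₀ ≤ t → ν t = D₂.mulVec (fbar t) - A₂₁.mulVec (e₁ t))
    ∧ (Hurwitz A₁₁ →
        Filter.Tendsto e₁ Filter.atTop (nhds 0)
        ∧ Filter.Tendsto (fun t => ν t - D₂.mulVec (fbar t))
            Filter.atTop (nhds 0)) := by
  have hinjection (t : ℝ) (ht : t₀ ≤ t) : ν t = D₂ *ᵥ fbar t - A₂₁ *ᵥ e₁ t := by
    obtain ⟨hey_zero, hey_deriv⟩ := hslide t ht
    have hbalance := (hey t).unique hey_deriv
    rw [hey_zero, mulVec_zero, add_zero, sub_eq_zero] at hbalance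
    rw [← hbalance]
    abel
  refine ⟨hinjection, fun hA => ?_⟩
  have he₁_lim := hA.tendsto_zero_of_hasDerivAt he₁
  have hA₂₁e₁_lim : Tendsto (fun t => -(A₂₁ *ᵥ e₁ t)) atTop (𝓝 0) := by
    simpa using (((continuous_const.matrix_mulVec continuous_id).tendsto 0).comp he₁_lim).neg
  refine ⟨he₁_lim, hA₂₁e₁_lim.congr' ?_⟩
  filter_upwards [eventually_ge_atTop t₀] with t ht
  rw [hinjection t ht]
  abel
end
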